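/- arXiv:2605.12819 — 2 statements merged into one kernel-verified Lean document; each statement's English description precedes it below -/
import Mathlib

section
/- Suppose f : R^n → R is C^1 with L-Lipschitz gradient. Let S ∈ R^{n×p} with columns s^i and T_i ∈ R^{n×q_i} for i = 1,…,p, all nonzero. Define the generalized simplex Hessian ∇²_s f(x^0;S;T_{1:p}) := (Sᵀ)†δ²_f, where the i-th row of δ²_f is (∇_s f(x^0+s^i;T_i) − ∇_s f(x^0;T_i))ᵀ and ∇_s f(y;T) := (Tᵀ)†δ_f(y;T) with (δ_f(y;T))_j = f(y+t^j) − f(y). Then ||∇²_s f(x^0;S;T_{1:p})|| ≤ L ||(S/Δ_S)†|| · sqrt(Σ_{i=1}^p q_i ||(T_i/Δ_{T_i})†||²), where ||·|| is the spectral norm, † the Moore–Penrose pseudoinverse, and Δ_A = max over columns a of A of ||a||. -/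
open Matrix
open scoped RealInnerProductSpace

noncomputable section

abbrev Eu (n : ℕ) := EuclideanSpace ℝ (Fin n)

def IsMP {a b : ℕ} (A : Matrix (Fin a) (Fin b) ℝ) (A' : Matrix (Fin b) (Fin a) ℝ) : Prop :=
  A * A' * A = A ∧ A' * A * A' = A' ∧ (A * A')ᵀ = A * A' ∧ (A' * A)ᵀ = A' * A

def euclNorm {k : ℕ} (v : Fin k → ℝ) : ℝ := Real.sqrt (∑ i, v i ^ 2)

def spNorm {a b : ℕ} (A : Matrix (Fin a) (Fin b) ℝ) : ℝ :=
  ⨆ v : {v : Fin b → ℝ // euclNorm v ≤ 1}, euclNorm (A.mulVec v.1)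

def frobNorm {a b : ℕ} (A : Matrix (Fin a) (Fin b) ℝ) : ℝ :=
  Real.sqrt (∑ i, ∑ j, A i j ^ 2)

def mat1Norm {a b : ℕ} (A : Matrix (Fin a) (Fin b) ℝ) : ℝ := ⨆ j, ∑ i, |A i j|

/-! The `i`-th row of `δ²_f` is `(Tᵢᵀ)† wᵢ` with the second differences
`wᵢⱼ = f(x⁰ + sⁱ + tᵢʲ) - f(x⁰ + sⁱ) - (f(x⁰ + tᵢʲ) - f(x⁰))`, which the mean value theorem bounds
by `L ‖sⁱ‖ ‖tᵢʲ‖ ≤ L Δ_S Δ_{Tᵢ}`. Pseudoinversion commutes with scaling, so `‖(Tᵢᵀ)†‖ = ‖T̄ᵢ†‖ / Δ_{Tᵢ}`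
and `‖(Sᵀ)†‖ = ‖S̄†‖ / Δ_S`. Hence the `i`-th row has norm at most `L Δ_S √qᵢ ‖T̄ᵢ†‖`, and bounding
the spectral norm of `δ²_f` by its Frobenius norm gives the claim. -/

open scoped Matrix.Norms.L2Operator

theorem euclNorm_eq_norm {k : ℕ} (v : Fin k → ℝ) :
    euclNorm v = ‖(EuclideanSpace.equiv (Fin k) ℝ).symm v‖ := by
  simp [euclNorm, EuclideanSpace.norm_eq]

theorem euclNorm_nonneg {k : ℕ} (v : Fin k → ℝ) : 0 ≤ euclNorm v := Real.sqrt_nonneg _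

theorem euclNorm_mulVec_le_l2_opNorm {a b : ℕ} (A : Matrix (Fin a) (Fin b) ℝ) (v : Fin b → ℝ) :
    euclNorm (A *ᵥ v) ≤ ‖A‖ * euclNorm v := by
  simpa [euclNorm_eq_norm] using A.l2_opNorm_mulVec ((EuclideanSpace.equiv (Fin b) ℝ).symm v)

theorem spNorm_eq_l2_opNorm {a b : ℕ} (A : Matrix (Fin a) (Fin b) ℝ) : spNorm A = ‖A‖ := by
  have hbdd : BddAbove (Set.range fun v : {v : Fin b → ℝ // euclNorm v ≤ 1} =>
      euclNorm (A *ᵥ v.1)) := by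
    refine ⟨‖A‖, ?_⟩
    rintro _ ⟨⟨v, hv⟩, rfl⟩
    exact (euclNorm_mulVec_le_l2_opNorm A v).trans (mul_le_of_le_one_right (norm_nonneg A) hv)
  refine le_antisymm ?_ ?_
  · have : Nonempty {v : Fin b → ℝ // euclNorm v ≤ 1} := ⟨⟨0, by simp [euclNorm]⟩⟩
    exact ciSup_le fun v => (euclNorm_mulVec_le_l2_opNorm A v.1).trans
      (mul_le_of_le_one_right (norm_nonneg A) v.2)
  · rw [Matrix.l2_opNorm_def]
    refine ContinuousLinearMap.opNorm_le_of_unit_norm (Real.iSup_nonneg fun _ => euclNorm_nonneg _)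
      fun x hx => ?_
    have : euclNorm (A *ᵥ x.ofLp) ≤ spNorm A :=
      le_ciSup hbdd ⟨x.ofLp, by simp [euclNorm_eq_norm, hx]⟩
    simpa [euclNorm_eq_norm, Matrix.toLpLin_apply] using this

theorem spNorm_nonneg {a b : ℕ} (A : Matrix (Fin a) (Fin b) ℝ) : 0 ≤ spNorm A :=
  spNorm_eq_l2_opNorm A ▸ norm_nonneg A

theorem spNorm_mul_le {a b c : ℕ} (A : Matrix (Fin a) (Fin b) ℝ) (B : Matrix (Fin b) (Fin c) ℝ) :
    spNorm (A * B) ≤ spNorm A * spNorm B := by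
  simpa only [spNorm_eq_l2_opNorm] using A.l2_opNorm_mul B

theorem spNorm_transpose {a b : ℕ} (A : Matrix (Fin a) (Fin b) ℝ) : spNorm Aᵀ = spNorm A := by
  simpa only [spNorm_eq_l2_opNorm, conjTranspose_eq_transpose_of_trivial]
    using A.l2_opNorm_conjTranspose

theorem spNorm_smul {a b : ℕ} (c : ℝ) (A : Matrix (Fin a) (Fin b) ℝ) :
    spNorm (c • A) = |c| * spNorm A := by
  simp only [spNorm_eq_l2_opNorm, norm_smul, Real.norm_eq_abs]

theorem euclNorm_mulVec_le {a b : ℕ} (A : Matrix (Fin a) (Fin b) ℝ) (v : Fin b → ℝ) :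
    euclNorm (A *ᵥ v) ≤ spNorm A * euclNorm v :=
  spNorm_eq_l2_opNorm A ▸ euclNorm_mulVec_le_l2_opNorm A v

theorem euclNorm_mulVec_le_frobNorm {a b : ℕ} (A : Matrix (Fin a) (Fin b) ℝ) (v : Fin b → ℝ) :
    euclNorm (A *ᵥ v) ≤ frobNorm A * euclNorm v := by
  rw [euclNorm, frobNorm, euclNorm, ← Real.sqrt_mul (by positivity), Finset.sum_mul]
  gcongr with i
  exact Finset.sum_mul_sq_le_sq_mul_sq Finset.univ (A i) v

theorem spNorm_le_frobNorm {a b : ℕ} (A : Matrix (Fin a) (Fin b) ℝ) : spNorm A ≤ frobNorm A := by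
  have : Nonempty {v : Fin b → ℝ // euclNorm v ≤ 1} := ⟨⟨0, by simp [euclNorm]⟩⟩
  exact ciSup_le fun v => (euclNorm_mulVec_le_frobNorm A v.1).trans
    (mul_le_of_le_one_right (Real.sqrt_nonneg _) v.2)

theorem frobNorm_le_of_euclNorm_row_le {a b : ℕ} (A : Matrix (Fin a) (Fin b) ℝ) (c : Fin a → ℝ)
    (h : ∀ i, euclNorm (A i) ≤ c i) : frobNorm A ≤ Real.sqrt (∑ i, c i ^ 2) := by
  refine Real.sqrt_le_sqrt (Finset.sum_le_sum fun i _ => ?_)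
  calc ∑ j, A i j ^ 2 = euclNorm (A i) ^ 2 := (Real.sq_sqrt (by positivity)).symm
    _ ≤ c i ^ 2 := pow_le_pow_left₀ (euclNorm_nonneg _) (h i) 2

theorem euclNorm_le_sqrt_card_mul {k : ℕ} (v : Fin k → ℝ) {C : ℝ} (hC : 0 ≤ C)
    (h : ∀ j, |v j| ≤ C) : euclNorm v ≤ Real.sqrt k * C := by
  rw [euclNorm, ← Real.sqrt_sq hC, ← Real.sqrt_mul (Nat.cast_nonneg k)]
  refine Real.sqrt_le_sqrt ?_
  calc ∑ j, v j ^ 2 ≤ ∑ _j : Fin k, C ^ 2 :=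
        Finset.sum_le_sum fun j _ => sq_le_sq' (abs_le.mp (h j)).1 (abs_le.mp (h j)).2
    _ = k * C ^ 2 := by simp

theorem euclNorm_col_le_iSup {a b : ℕ} (A : Matrix (Fin a) (Fin b) ℝ) (j : Fin b) :
    euclNorm (fun k => A k j) ≤ ⨆ j, euclNorm fun k => A k j :=
  le_ciSup (f := fun j => euclNorm fun k => A k j) (Set.finite_range _).bddAbove j

theorem iSup_euclNorm_col_pos {a b : ℕ} {A : Matrix (Fin a) (Fin b) ℝ} (hA : A ≠ 0) :
    0 < ⨆ j, euclNorm fun k => A k j := by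
  obtain ⟨k, j, hkj⟩ : ∃ k j, A k j ≠ 0 := by
    by_contra! h
    exact hA (Matrix.ext h)
  refine lt_of_lt_of_le ?_ (euclNorm_col_le_iSup A j)
  exact Real.sqrt_pos.mpr <| lt_of_lt_of_le (by positivity)
    (Finset.single_le_sum (f := fun k => A k j ^ 2) (fun _ _ => sq_nonneg _) (Finset.mem_univ k))

namespace IsMP

variable {a b : ℕ} {A : Matrix (Fin a) (Fin b) ℝ} {X Y : Matrix (Fin b) (Fin a) ℝ}

theorem unique (hX : IsMP A X) (hY : IsMP A Y) : X = Y := by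
  obtain ⟨hX1, hX2, hX3, hX4⟩ := hX
  obtain ⟨hY1, hY2, hY3, hY4⟩ := hY
  have hAX : A * X = A * Y := by
    calc A * X = (A * Y * A * X)ᵀ := by rw [hY1, hX3]
      _ = (A * X)ᵀ * (A * Y)ᵀ := by rw [Matrix.mul_assoc, ← transpose_mul]
      _ = A * Y := by rw [hX3, hY3, ← Matrix.mul_assoc, hX1]
  have hXA : X * A = Y * A := by
    calc X * A = (X * (A * Y * A))ᵀ := by rw [hY1, hX4]
      _ = (Y * A)ᵀ * (X * A)ᵀ := by simp only [← transpose_mul, Matrix.mul_assoc]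
      _ = Y * A := by rw [hY4, hX4, Matrix.mul_assoc, ← Matrix.mul_assoc A, hX1]
  calc X = X * A * X := hX2.symm
    _ = Y * A * Y := by rw [Matrix.mul_assoc, hAX, ← Matrix.mul_assoc, hXA]
    _ = Y := hY2

theorem transpose (h : IsMP A X) : IsMP Aᵀ Xᵀ := by
  obtain ⟨h1, h2, h3, h4⟩ := h
  refine ⟨?_, ?_, ?_, ?_⟩
  · rw [← transpose_mul, ← transpose_mul, ← Matrix.mul_assoc, h1]
  · rw [← transpose_mul, ← transpose_mul, ← Matrix.mul_assoc, h2]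
  · rw [← transpose_mul, h4]; exact h4
  · rw [← transpose_mul, h3]; exact h3

theorem smul (h : IsMP A X) {c : ℝ} (hc : c ≠ 0) : IsMP (c • A) (c⁻¹ • X) := by
  obtain ⟨h1, h2, h3, h4⟩ := h
  have hAX : (c • A) * (c⁻¹ • X) = A * X := by
    rw [Matrix.smul_mul, Matrix.mul_smul, smul_smul, mul_inv_cancel₀ hc, one_smul]
  have hXA : (c⁻¹ • X) * (c • A) = X * A := by
    rw [Matrix.smul_mul, Matrix.mul_smul, smul_smul, inv_mul_cancel₀ hc, one_smul]
  refine ⟨?_, ?_, ?_, ?_⟩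
  · rw [hAX, Matrix.mul_smul, h1]
  · rw [hXA, Matrix.mul_smul, h2]
  · rw [hAX, h3]
  · rw [hXA, h4]

theorem spNorm_eq_of_normalized {c : ℝ} {X : Matrix (Fin a) (Fin b) ℝ} (hX : IsMP Aᵀ X)
    (hY : IsMP (c⁻¹ • A) Y) (hc : 0 < c) : spNorm X = c⁻¹ * spNorm Y := by
  have hY' : IsMP Aᵀ (c⁻¹ • Yᵀ) := by
    simpa [transpose_smul, smul_smul, hc.ne'] using hY.transpose.smul hc.ne'
  rw [hX.unique hY', spNorm_smul, spNorm_transpose, abs_of_pos (inv_pos.mpr hc)]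

end IsMP

section SecondDifference

variable {E : Type*} [NormedAddCommGroup E] [InnerProductSpace ℝ E] [CompleteSpace E]

/-- Mean value theorem applied to `τ ↦ f (a + t + τ • s) - f (a + τ • s)` on `[0, 1]`. -/
theorem abs_secondDiff_le {f : E → ℝ} {g : E → E} {L : ℝ}
    (hgrad : ∀ x, HasGradientAt f (g x) x) (hlip : ∀ x y, ‖g x - g y‖ ≤ L * ‖x - y‖)
    (a s t : E) :
    |f (a + s + t) - f (a + s) - (f (a + t) - f a)| ≤ L * ‖s‖ * ‖t‖ := by
  have hderiv : ∀ (x v : E) (τ : ℝ),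
      HasDerivAt (fun τ : ℝ => f (x + τ • v)) ⟪g (x + τ • v), v⟫ τ := by
    intro x v τ
    have hline : HasDerivAt (fun τ : ℝ => x + τ • v) v τ := by
      simpa using ((hasDerivAt_id τ).smul_const v).const_add x
    have h := (hgrad (x + τ • v)).hasFDerivAt.comp_hasDerivAt τ hline
    simp only [InnerProductSpace.toDual_apply_apply] at h
    exact h
  have hbound : ∀ τ ∈ Set.Ico (0 : ℝ) 1,
      ‖⟪g (a + t + τ • s), s⟫ - ⟪g (a + τ • s), s⟫‖ ≤ L * ‖t‖ * ‖s‖ := by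
    intro τ _
    rw [← inner_sub_left, Real.norm_eq_abs]
    calc |⟪g (a + t + τ • s) - g (a + τ • s), s⟫|
        ≤ ‖g (a + t + τ • s) - g (a + τ • s)‖ * ‖s‖ := abs_real_inner_le_norm _ _
      _ ≤ L * ‖(a + t + τ • s) - (a + τ • s)‖ * ‖s‖ := by gcongr; exact hlip _ _
      _ = L * ‖t‖ * ‖s‖ := by rw [add_sub_add_right_eq_sub, add_sub_cancel_left]
  have key := norm_image_sub_le_of_norm_deriv_le_segment_01'
    (fun τ _ => ((hderiv (a + t) s τ).sub (hderiv a s τ)).hasDerivWithinAt) hbound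
  simp only [Pi.sub_apply, one_smul, zero_smul, add_zero, Real.norm_eq_abs] at key
  rw [add_right_comm a s t, mul_right_comm]
  exact key

end SecondDifference

theorem IsMP.euclNorm_mulVec_le_of_normalized {n q : ℕ} {T Tp : Matrix (Fin n) (Fin q) ℝ}
    {Tbp : Matrix (Fin q) (Fin n) ℝ} {c : ℝ} (hc : 0 < c) (hTp : IsMP Tᵀ Tp)
    (hTbp : IsMP (c⁻¹ • T) Tbp) {w : Fin q → ℝ} {K : ℝ} (hK : 0 ≤ K)
    (hw : ∀ j, |w j| ≤ K * c) :
    euclNorm (Tp *ᵥ w) ≤ K * Real.sqrt q * spNorm Tbp := by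
  calc euclNorm (Tp *ᵥ w) ≤ spNorm Tp * euclNorm w := euclNorm_mulVec_le Tp w
    _ ≤ c⁻¹ * spNorm Tbp * (Real.sqrt q * (K * c)) := by
        rw [hTp.spNorm_eq_of_normalized hTbp hc]
        gcongr
        · exact mul_nonneg (inv_nonneg.mpr hc.le) (spNorm_nonneg Tbp)
        · exact euclNorm_le_sqrt_card_mul w (by positivity) hw
    _ = K * Real.sqrt q * spNorm Tbp := by field_simp

theorem spNorm_mul_le_of_euclNorm_row_le {a b c : ℕ} (A : Matrix (Fin a) (Fin b) ℝ)
    (B : Matrix (Fin b) (Fin c) ℝ) (r : Fin b → ℝ) (h : ∀ i, euclNorm (B i) ≤ r i) :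
    spNorm (A * B) ≤ spNorm A * Real.sqrt (∑ i, r i ^ 2) :=
  (spNorm_mul_le A B).trans <| mul_le_mul_of_nonneg_left
    ((spNorm_le_frobNorm B).trans (frobNorm_le_of_euclNorm_row_le B r h))
    (spNorm_nonneg A)

theorem stmt_7_general {n p : ℕ} (q : Fin p → ℕ)
    (f : Eu n → ℝ) (g : Eu n → Eu n) (L : ℝ) (hL : 0 ≤ L)
    (hgrad : ∀ x, HasGradientAt f (g x) x)
    (hlip : ∀ x y, ‖g x - g y‖ ≤ L * ‖x - y‖)
    (x0 : Eu n)
    (S : Matrix (Fin n) (Fin p) ℝ) (hS : S ≠ 0)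
    (T : ∀ i, Matrix (Fin n) (Fin (q i)) ℝ) (hT : ∀ i, T i ≠ 0)
    -- Moore–Penrose pseudoinverses of Sᵀ and (T i)ᵀ
    (Sp : Matrix (Fin n) (Fin p) ℝ) (hSp : IsMP Sᵀ Sp)
    (Tp : ∀ i, Matrix (Fin n) (Fin (q i)) ℝ) (hTp : ∀ i, IsMP (T i)ᵀ (Tp i))
    -- Moore–Penrose pseudoinverses of the normalized matrices S/Δ_S and T_i/Δ_{T_i}
    (Sbp : Matrix (Fin p) (Fin n) ℝ)
    (hSbp : IsMP ((⨆ i, euclNorm fun k => S k i)⁻¹ • S) Sbp)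
    (Tbp : ∀ i, Matrix (Fin (q i)) (Fin n) ℝ)
    (hTbp : ∀ i, IsMP ((⨆ j, euclNorm fun k => T i k j)⁻¹ • T i) (Tbp i)) :
    spNorm (Sp * Matrix.of (fun (i : Fin p) (k : Fin n) =>
        ((Tp i).mulVec (fun j => f (x0 + (EuclideanSpace.equiv (Fin n) ℝ).symm (fun a => S a i) + (EuclideanSpace.equiv (Fin n) ℝ).symm (fun a => T i a j))
            - f (x0 + (EuclideanSpace.equiv (Fin n) ℝ).symm (fun a => S a i)))
          - (Tp i).mulVec (fun j => f (x0 + (EuclideanSpace.equiv (Fin n) ℝ).symm (fun a => T i a j)) - f x0)) k))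
      ≤ L * spNorm Sbp * Real.sqrt (∑ i, (q i : ℝ) * spNorm (Tbp i) ^ 2) := by
  set ΔS := ⨆ i, euclNorm fun k => S k i
  have hΔS : 0 < ΔS := iSup_euclNorm_col_pos hS
  have hLΔS : 0 ≤ L * ΔS := mul_nonneg hL hΔS.le
  refine (spNorm_mul_le_of_euclNorm_row_le Sp _
    (fun i => L * ΔS * Real.sqrt (q i) * spNorm (Tbp i)) fun i => ?_).trans_eq ?_
  · simp only [← mulVec_sub]
    refine (hTp i).euclNorm_mulVec_le_of_normalized (iSup_euclNorm_col_pos (hT i)) (hTbp i) hLΔS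
      fun j => (abs_secondDiff_le hgrad hlip _ _ _).trans ?_
    rw [← euclNorm_eq_norm, ← euclNorm_eq_norm]
    gcongr
    · exact euclNorm_nonneg _
    · exact euclNorm_col_le_iSup S i
    · exact euclNorm_col_le_iSup (T i) j
  · have hsum : ∑ i, (L * ΔS * Real.sqrt (q i) * spNorm (Tbp i)) ^ 2
        = (L * ΔS) ^ 2 * ∑ i, (q i : ℝ) * spNorm (Tbp i) ^ 2 := by
      rw [Finset.mul_sum]
      refine Finset.sum_congr rfl fun i _ => ?_
      rw [mul_pow, mul_pow, Real.sq_sqrt (Nat.cast_nonneg _)]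
      ring
    rw [hSp.spNorm_eq_of_normalized hSbp hΔS, hsum, Real.sqrt_mul (sq_nonneg _),
      Real.sqrt_sq hLΔS]
    field_simp

theorem stmt_7 {n p : ℕ} (hp : 0 < p) (q : Fin p → ℕ) (hq : ∀ i, 0 < q i)
    (f : Eu n → ℝ) (g : Eu n → Eu n) (L : ℝ) (hL : 0 ≤ L)
    (hgrad : ∀ x, HasGradientAt f (g x) x)
    (hlip : ∀ x y, ‖g x - g y‖ ≤ L * ‖x - y‖)
    (x0 : Eu n)
    (S : Matrix (Fin n) (Fin p) ℝ) (hS : S ≠ 0)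
    (T : ∀ i, Matrix (Fin n) (Fin (q i)) ℝ) (hT : ∀ i, T i ≠ 0)
    -- Moore–Penrose pseudoinverses of Sᵀ and (T i)ᵀ
    (Sp : Matrix (Fin n) (Fin p) ℝ) (hSp : IsMP Sᵀ Sp)
    (Tp : ∀ i, Matrix (Fin n) (Fin (q i)) ℝ) (hTp : ∀ i, IsMP (T i)ᵀ (Tp i))
    -- Moore–Penrose pseudoinverses of the normalized matrices S/Δ_S and T_i/Δ_{T_i}
    (Sbp : Matrix (Fin p) (Fin n) ℝ)
    (hSbp : IsMP ((⨆ i, euclNorm fun k => S k i)⁻¹ • S) Sbp)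
    (Tbp : ∀ i, Matrix (Fin (q i)) (Fin n) ℝ)
    (hTbp : ∀ i, IsMP ((⨆ j, euclNorm fun k => T i k j)⁻¹ • T i) (Tbp i)) :
    spNorm (Sp * Matrix.of (fun (i : Fin p) (k : Fin n) =>
        ((Tp i).mulVec (fun j => f (x0 + (EuclideanSpace.equiv (Fin n) ℝ).symm (fun a => S a i) + (EuclideanSpace.equiv (Fin n) ℝ).symm (fun a => T i a j))
            - f (x0 + (EuclideanSpace.equiv (Fin n) ℝ).symm (fun a => S a i)))
          - (Tp i).mulVec (fun j => f (x0 + (EuclideanSpace.equiv (Fin n) ℝ).symm (fun a => T i a j)) - f x0)) k))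
      ≤ L * spNorm Sbp * Real.sqrt (∑ i, (q i : ℝ) * spNorm (Tbp i) ^ 2) :=
  stmt_7_general q f g L hL hgrad hlip x0 S hS T hT Sp hSp Tp hTp Sbp hSbp Tbp hTbp
end
end

section
/- Let x^0 ∈ R^n and let d^1,…,d^p be nonzero vectors. Suppose f : R^n → R is C^2 with L-Lipschitz Hessian, and suppose (α, H) ∈ R^n × S_n(R) satisfies the interpolation conditions (d^i)ᵀα + (1/2)(d^i)ᵀH d^i = f(x^0+d^i) − f(x^0) and −(d^i)ᵀα + (1/2)(d^i)ᵀH d^i = f(x^0−d^i) − f(x^0) for all i. Then for each i, |(d^i/||d^i||)ᵀ (H − ∇²f(x^0)) (d^i/||d^i||)| ≤ (L/3) max_j ||d^j||. -/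
open Matrix
open scoped RealInnerProductSpace

noncomputable section

/-! The interpolation conditions add up to `(dⁱ)ᵀ H dⁱ = f(x⁰ + dⁱ) + f(x⁰ - dⁱ) - 2 f(x⁰)`, so
everything reduces to a bound on this central second difference. Along `φ(t) = f(x⁰ + t e)` the
Lipschitz Hessian gives `|φ''(t) - φ''(0)| ≤ L ‖e‖³ |t|`. Two successive comparison arguments then
bound `φ'(t) - φ'(-t) - 2 φ''(0) t` by `L ‖e‖³ t²` and `φ(t) + φ(-t) - 2 φ(0) - φ''(0) t²` by
`L ‖e‖³ t³ / 3` for `t ≥ 0`; at `t = 1`, after dividing by `‖e‖²`, this is the claim. -/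

lemma euclNorm_eq_norm_toLp {k : ℕ} (v : Fin k → ℝ) : euclNorm v = ‖WithLp.toLp 2 v‖ := by
  simp [euclNorm, EuclideanSpace.norm_eq, sq_abs]

lemma norm_toEuclideanCLM_le_spNorm {k : ℕ} (A : Matrix (Fin k) (Fin k) ℝ) :
    ‖toEuclideanCLM (𝕜 := ℝ) A‖ ≤ spNorm A := by
  set T := toEuclideanCLM (𝕜 := ℝ) A
  have hT : ∀ v, euclNorm (A *ᵥ v) = ‖T (WithLp.toLp 2 v)‖ := fun v ↦
    euclNorm_eq_norm_toLp _
  have hbdd : BddAbove (Set.range fun v : {v : Fin k → ℝ // euclNorm v ≤ 1} ↦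
      euclNorm (A *ᵥ v.1)) := by
    refine ⟨‖T‖, ?_⟩
    rintro _ ⟨⟨v, hv⟩, rfl⟩
    rw [euclNorm_eq_norm_toLp] at hv
    calc euclNorm (A *ᵥ v) = ‖T (WithLp.toLp 2 v)‖ := hT v
      _ ≤ ‖T‖ * ‖WithLp.toLp 2 v‖ := T.le_opNorm _
      _ ≤ ‖T‖ := mul_le_of_le_one_right (norm_nonneg _) hv
  refine T.opNorm_le_of_unit_norm (Real.iSup_nonneg fun _ ↦ Real.sqrt_nonneg _) fun v hv ↦ ?_
  have hv' : euclNorm v.ofLp ≤ 1 := by simp [euclNorm_eq_norm_toLp, hv]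
  calc ‖T v‖ = euclNorm (A *ᵥ v.ofLp) := by rw [hT]
    _ ≤ spNorm A := le_ciSup hbdd ⟨v.ofLp, hv'⟩

lemma abs_le_of_hasDerivAt_of_abs_deriv_le {u u' B B' : ℝ → ℝ} {a t : ℝ}
    (hu : ∀ s, HasDerivAt u (u' s) s) (hB : ∀ s, HasDerivAt B (B' s) s) (ha : |u a| ≤ B a)
    (bound : ∀ s, a ≤ s → |u' s| ≤ B' s) (ht : a ≤ t) : |u t| ≤ B t :=
  image_norm_le_of_norm_deriv_right_le_deriv_boundary
    (fun s _ ↦ (hu s).continuousAt.continuousWithinAt) (fun s _ ↦ (hu s).hasDerivWithinAt)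
    ha hB (fun s hs ↦ bound s hs.1) ⟨ht, le_rfl⟩

theorem abs_central_second_difference_sub_le {φ ψ q : ℝ → ℝ} {M : ℝ}
    (hφ : ∀ t, HasDerivAt φ (ψ t) t) (hψ : ∀ t, HasDerivAt ψ (q t) t)
    (hq : ∀ t, |q t - q 0| ≤ M * |t|) :
    |φ 1 + φ (-1) - 2 * φ 0 - q 0| ≤ M / 3 := by
  have hψ_neg : ∀ t, HasDerivAt (fun s ↦ ψ (-s)) (-q (-t)) t := fun t ↦ by
    simpa [Function.comp_def] using (hψ (-t)).comp t (hasDerivAt_neg t)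
  have hφ_neg : ∀ t, HasDerivAt (fun s ↦ φ (-s)) (-ψ (-t)) t := fun t ↦ by
    simpa [Function.comp_def] using (hφ (-t)).comp t (hasDerivAt_neg t)
  have hodd : ∀ t, 0 ≤ t → |ψ t - ψ (-t) - 2 * q 0 * t| ≤ M * t ^ 2 := by
    refine fun t ht ↦ abs_le_of_hasDerivAt_of_abs_deriv_le
      (u := fun s ↦ ψ s - ψ (-s) - 2 * q 0 * s) (u' := fun s ↦ q s + q (-s) - 2 * q 0)
      (B := fun s ↦ M * s ^ 2) (B' := fun s ↦ 2 * M * s)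
      (fun s ↦ ?_) (fun s ↦ ?_) (by simp) (fun s hs ↦ ?_) ht
    · exact (((hψ s).sub (hψ_neg s)).sub ((hasDerivAt_id s).const_mul (2 * q 0))).congr_deriv
        (by ring)
    · exact ((hasDerivAt_pow 2 s).const_mul M).congr_deriv (by ring)
    · calc |q s + q (-s) - 2 * q 0| = |(q s - q 0) + (q (-s) - q 0)| := by ring_nf
        _ ≤ |q s - q 0| + |q (-s) - q 0| := abs_add_le _ _
        _ ≤ M * |s| + M * |-s| := add_le_add (hq s) (hq (-s))
        _ = 2 * M * s := by rw [abs_neg, abs_of_nonneg hs]; ring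
  have heven : |φ 1 + φ (-1) - 2 * φ 0 - q 0 * 1 ^ 2| ≤ M * 1 ^ 3 / 3 := by
    refine abs_le_of_hasDerivAt_of_abs_deriv_le
      (u := fun s ↦ φ s + φ (-s) - 2 * φ 0 - q 0 * s ^ 2)
      (u' := fun s ↦ ψ s - ψ (-s) - 2 * q 0 * s)
      (B := fun s ↦ M * s ^ 3 / 3) (B' := fun s ↦ M * s ^ 2)
      (fun s ↦ ?_) (fun s ↦ ?_) (by simp [two_mul]) hodd zero_le_one
    · exact ((((hφ s).add (hφ_neg s)).sub_const (2 * φ 0)).sub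
        ((hasDerivAt_pow 2 s).const_mul (q 0))).congr_deriv (by ring)
    · exact (((hasDerivAt_pow 3 s).const_mul M).div_const 3).congr_deriv (by ring)
  simpa using heven

theorem abs_central_second_difference_sub_inner_le {E : Type*} [NormedAddCommGroup E]
    [InnerProductSpace ℝ E] [CompleteSpace E] {f : E → ℝ} {g : E → E} {A : E → E →L[ℝ] E} {L : ℝ}
    (hgrad : ∀ x, HasGradientAt f (g x) x) (hhess : ∀ x, HasFDerivAt g (A x) x) (x e : E)
    (hlip : ∀ y, ‖A y - A x‖ ≤ L * ‖y - x‖) :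
    |f (x + e) + f (x - e) - 2 * f x - ⟪e, A x e⟫| ≤ L / 3 * ‖e‖ ^ 3 := by
  have hline : ∀ t : ℝ, HasDerivAt (fun s : ℝ ↦ x + s • e) e t := fun t ↦ by
    simpa using ((hasDerivAt_id t).smul_const e).const_add x
  have hφ : ∀ t : ℝ, HasDerivAt (fun s ↦ f (x + s • e)) ⟪e, g (x + t • e)⟫ t := fun t ↦ by
    simpa [Function.comp_def, real_inner_comm] using
      (hgrad _).hasFDerivAt.comp_hasDerivAt t (hline t)
  have hψ : ∀ t : ℝ, HasDerivAt (fun s ↦ ⟪e, g (x + s • e)⟫) ⟪e, A (x + t • e) e⟫ t := fun t ↦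
    (innerSL ℝ e).hasFDerivAt.comp_hasDerivAt t ((hhess _).comp_hasDerivAt t (hline t))
  have hq : ∀ t : ℝ, |⟪e, A (x + t • e) e⟫ - ⟪e, A (x + (0 : ℝ) • e) e⟫|
      ≤ L * ‖e‖ ^ 3 * |t| := fun t ↦ by
    rw [zero_smul, add_zero, ← inner_sub_right, ← _root_.sub_apply]
    calc |⟪e, (A (x + t • e) - A x) e⟫| ≤ ‖e‖ * (‖A (x + t • e) - A x‖ * ‖e‖) :=
          (abs_real_inner_le_norm _ _).trans
            (mul_le_mul_of_nonneg_left ((A _ - A x).le_opNorm e) (norm_nonneg e))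
      _ ≤ ‖e‖ * (L * ‖t • e‖ * ‖e‖) := by
          gcongr
          simpa using hlip (x + t • e)
      _ = L * ‖e‖ ^ 3 * |t| := by rw [norm_smul, Real.norm_eq_abs]; ring
  have := abs_central_second_difference_sub_le hφ hψ hq
  simp only [one_smul, neg_smul, zero_smul, add_zero, ← sub_eq_add_neg] at this
  linarith

theorem stmt_10_general {n p : ℕ} (f : Eu n → ℝ) (g : Eu n → Eu n)
    (Hf : Eu n → Matrix (Fin n) (Fin n) ℝ) (L : ℝ) (hL : 0 ≤ L)
    (hgrad : ∀ x, HasGradientAt f (g x) x)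
    (hhess : ∀ x, HasFDerivAt g (Matrix.toEuclideanCLM (𝕜 := ℝ) (Hf x)) x)
    (hlip : ∀ x y, spNorm (Hf x - Hf y) ≤ L * ‖x - y‖)
    (x0 : Eu n) (d : Fin p → Eu n)
    (α : Fin n → ℝ) (H : Matrix (Fin n) (Fin n) ℝ)
    (hint1 : ∀ i, (d i) ⬝ᵥ α + (1/2) * ((d i) ⬝ᵥ H.mulVec (d i))
        = f (x0 + d i) - f x0)
    (hint2 : ∀ i, -((d i) ⬝ᵥ α) + (1/2) * ((d i) ⬝ᵥ H.mulVec (d i))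
        = f (x0 - d i) - f x0)
    (i : Fin p) :
    |(‖d i‖⁻¹ • d i) ⬝ᵥ (H - Hf x0).mulVec (‖d i‖⁻¹ • d i)|
      ≤ L / 3 * ⨆ j, ‖d j‖ := by
  set e := d i
  have hsum : e ⬝ᵥ H *ᵥ e = f (x0 + e) + f (x0 - e) - 2 * f x0 := by
    linarith [hint1 i, hint2 i]
  have htaylor := abs_central_second_difference_sub_inner_le hgrad hhess x0 e fun y ↦ by
    rw [← map_sub]
    exact (norm_toEuclideanCLM_le_spNorm _).trans (hlip y x0)
  rw [inner_toEuclideanCLM, ← hsum, ← dotProduct_sub, ← sub_mulVec] at htaylor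
  have hsup : ‖e‖ ≤ ⨆ j, ‖d j‖ := le_ciSup (Set.finite_range fun j ↦ ‖d j‖).bddAbove i
  calc |(‖e‖⁻¹ • e) ⬝ᵥ (H - Hf x0) *ᵥ (‖e‖⁻¹ • e)|
      = ‖e‖⁻¹ ^ 2 * |e ⬝ᵥ (H - Hf x0) *ᵥ e| := by
        simp [mulVec_smul, abs_mul, sq, mul_assoc]
    _ ≤ ‖e‖⁻¹ ^ 2 * (L / 3 * ‖e‖ ^ 3) := by gcongr
    _ = L / 3 * ‖e‖ := by
        rcases eq_or_ne ‖e‖ 0 with he | he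
        · simp [he]
        · field_simp
    _ ≤ L / 3 * ⨆ j, ‖d j‖ := by gcongr

theorem stmt_10 {n p : ℕ} (f : Eu n → ℝ) (g : Eu n → Eu n)
    (Hf : Eu n → Matrix (Fin n) (Fin n) ℝ) (L : ℝ) (hL : 0 ≤ L)
    (hgrad : ∀ x, HasGradientAt f (g x) x)
    (hhess : ∀ x, HasFDerivAt g (Matrix.toEuclideanCLM (𝕜 := ℝ) (Hf x)) x)
    (hlip : ∀ x y, spNorm (Hf x - Hf y) ≤ L * ‖x - y‖)
    (x0 : Eu n) (d : Fin p → Eu n) (hd : ∀ i, d i ≠ 0)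
    (α : Fin n → ℝ) (H : Matrix (Fin n) (Fin n) ℝ) (hH : H.IsSymm)
    (hint1 : ∀ i, (d i) ⬝ᵥ α + (1/2) * ((d i) ⬝ᵥ H.mulVec (d i))
        = f (x0 + d i) - f x0)
    (hint2 : ∀ i, -((d i) ⬝ᵥ α) + (1/2) * ((d i) ⬝ᵥ H.mulVec (d i))
        = f (x0 - d i) - f x0)
    (i : Fin p) :
    |(‖d i‖⁻¹ • d i) ⬝ᵥ (H - Hf x0).mulVec (‖d i‖⁻¹ • d i)|
      ≤ L / 3 * ⨆ j, ‖d j‖ :=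
  stmt_10_general f g Hf L hL hgrad hhess hlip x0 d α H hint1 hint2 i
end
end
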